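/- arXiv:math/0609756 — 3 statements merged into one kernel-verified Lean document; each statement's English description precedes it below -/
import Mathlib

section
/- Every (n,k,d)-graph G is also an (n',k',d)-graph whenever 0 ≤ n' ≤ n, 0 ≤ k' ≤ k, and n' ≡ n (mod 2). -/
open SimpleGraph

/-- `M` is a `k`-matching in its ambient graph `H`: a matching consisting of exactly `k`
edges, i.e. covering exactly `2 * k` vertices. -/
def IsKMatching {W : Type*} {H : SimpleGraph W} (M : H.Subgraph) (k : ℕ) : Prop :=
  M.IsMatching ∧ M.verts.ncard = 2 * k

/-- `M` is a defect-`d` matching in its ambient graph `H` on the vertex type `W`: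
a matching covering exactly `|W| - d` vertices. -/
def IsDefectMatching {W : Type*} {H : SimpleGraph W} (M : H.Subgraph) (d : ℕ) : Prop :=
  M.IsMatching ∧ M.verts.ncard = Nat.card W - d

/-- `G` is an `(n,k,d)`-graph: `|V(G)| ≥ n + 2k + d + 2`, `|V(G)| - n - d` is even, and for
every set `S` of `n` vertices the graph `G - S` contains a `k`-matching, and every
`k`-matching of `G - S` extends to a defect-`d` matching of `G - S`. -/
def IsNkdGraph {V : Type*} [Fintype V] (G : SimpleGraph V) (n k d : ℕ) : Prop :=
  n + 2 * k + d + 2 ≤ Nat.card V ∧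
  Even (Nat.card V - n - d) ∧
  ∀ S : Finset V, S.card = n →
    (∃ M : (G.induce ((S : Set V)ᶜ)).Subgraph, IsKMatching M k) ∧
    ∀ M : (G.induce ((S : Set V)ᶜ)).Subgraph, IsKMatching M k →
      ∃ M' : (G.induce ((S : Set V)ᶜ)).Subgraph, M ≤ M' ∧ IsDefectMatching M' d

/-- The number of odd components of `H`, i.e. connected components with an odd number
of vertices. -/
noncomputable def oddComponentsCard {W : Type*} (H : SimpleGraph W) : ℕ :=
  Nat.card {c : H.ConnectedComponent // Odd (Nat.card c.supp)}

/-- The subgraph of `H` induced on the set `s` is factor-critical: deleting any one vertex of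
`s` leaves a graph with a perfect matching. -/
def IsFactorCriticalOn {W : Type*} (H : SimpleGraph W) (s : Set W) : Prop :=
  ∀ w ∈ s, ∃ M : (H.induce (s \ {w})).Subgraph, M.IsPerfectMatching

/-- The graph `G + x` obtained from `G` by adding one new vertex (`none`) joined to every
vertex of `G`. -/
def addUniversalVertex {V : Type*} (G : SimpleGraph V) : SimpleGraph (Option V) :=
  SimpleGraph.fromRel (fun a b =>
    (∃ u v, a = some u ∧ b = some v ∧ G.Adj u v) ∨ a = none)

/-!
Call a matching small if it covers at most `2k` vertices. In an `(n,k,d)`-graph every small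
matching `M` of `G - S`, `|S| = n`, extends to a defect-`d` matching, not only the
`k`-matchings: remove an edge `xy` of `M`, extend the rest (by induction) to a defect-`d`
matching `F`, trade the edges of `F` at `x` and `y` for `xy`, shrink the result to a
`k`-matching containing `M`, and extend that one.

To pass from `n` to `n - 2`, let `|S| = n - 2` and `M` be small in `G - S`: extending `M`
inside `G - S - {x, y}`, for any `x, y` outside `S ∪ V(M)`, exhibits an edge `uv` of `G - S`
disjoint from `M`; extend `M` inside `G - S - {u, v}` and add `uv`. Lowering `k` is free, as
`k'`-matchings are small.
-/

namespace SimpleGraph.Subgraph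

section

variable {W : Type*} {H : SimpleGraph W} {M N P : H.Subgraph} {s : Set W} {u v x y : W}

lemma IsMatching.deleteVerts (hM : M.IsMatching)
    (hs : ∀ ⦃u v⦄, M.Adj u v → u ∈ s → v ∈ s) : (M.deleteVerts s).IsMatching := by
  rintro u ⟨hu, hus⟩
  obtain ⟨v, huv, huniq⟩ := hM hu
  refine ⟨v, deleteVerts_adj.mpr ⟨hu, hus, M.edge_vert huv.symm, fun hv => hus (hs huv.symm hv),
    huv⟩, fun w hw => huniq w (deleteVerts_adj.mp hw).2.2.2.2⟩

lemma IsMatching.notMem_verts_of_adj (hP : P.IsMatching) (hN : N.IsMatching) (hPN : P ≤ N)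
    (huv : N.Adj u v) (hu : u ∉ P.verts) : v ∉ P.verts := fun hv => by
  obtain ⟨w, hvw, -⟩ := hP hv
  rw [hN.eq_of_adj_left huv.symm (hPN.2 hvw)] at hu
  exact hu (P.edge_vert hvw.symm)

lemma IsMatching.sup_subgraphOfAdj (hM : M.IsMatching) (hxy : H.Adj x y) (hx : x ∉ M.verts)
    (hy : y ∉ M.verts) : (M ⊔ H.subgraphOfAdj hxy).IsMatching := by
  refine hM.sup (.subgraphOfAdj hxy) ?_
  rw [hM.support_eq_verts, support_subgraphOfAdj, Set.disjoint_right]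
  rintro a (rfl | rfl) <;> assumption

lemma IsMatching.le_deleteVerts_sup_subgraphOfAdj (hM : M.IsMatching) (hxy : M.Adj x y) :
    M ≤ M.deleteVerts {x, y} ⊔ H.subgraphOfAdj (M.adj_sub hxy) := by
  constructor
  · intro v hv
    by_cases hvxy : v ∈ ({x, y} : Set W)
    · exact Or.inr hvxy
    · exact Or.inl ⟨hv, hvxy⟩
  · intro a b hab
    by_cases hab' : a ∈ ({x, y} : Set W) ∨ b ∈ ({x, y} : Set W)
    · right
      rw [subgraphOfAdj_adj]
      rcases hab' with (rfl | rfl) | (rfl | rfl)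
      · rw [hM.eq_of_adj_left hab hxy]
      · rw [hM.eq_of_adj_left hab hxy.symm, Sym2.eq_swap]
      · rw [hM.eq_of_adj_right hab hxy.symm, Sym2.eq_swap]
      · rw [hM.eq_of_adj_right hab hxy]
    · push Not at hab'
      exact Or.inl <| deleteVerts_adj.mpr
        ⟨M.edge_vert hab, hab'.1, M.edge_vert hab.symm, hab'.2, hab⟩

lemma IsMatching.even_ncard_verts [Finite W] (hM : M.IsMatching) : Even M.verts.ncard := by
  have := Fintype.ofFinite M.verts
  rw [Set.ncard_eq_toFinset_card']
  exact hM.even_card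

lemma le_deleteVerts (hPN : P ≤ N) (hs : Disjoint P.verts s) : P ≤ N.deleteVerts s :=
  ⟨fun _ hv => ⟨hPN.1 hv, hs.notMem_of_mem_left hv⟩, fun _ _ hab => deleteVerts_adj.mpr
    ⟨hPN.1 hab.fst_mem, hs.notMem_of_mem_left hab.fst_mem, hPN.1 hab.snd_mem,
      hs.notMem_of_mem_left hab.snd_mem, hPN.2 hab⟩⟩

lemma IsMatching.deleteVerts_pair (hM : M.IsMatching) (hxy : M.Adj x y) :
    (M.deleteVerts {x, y}).IsMatching := by
  refine hM.deleteVerts fun u v huv hu => ?_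
  rcases hu with rfl | rfl
  · exact Or.inr (hM.eq_of_adj_left hxy huv).symm
  · exact Or.inl (hM.eq_of_adj_left hxy.symm huv).symm

lemma ncard_verts_deleteVerts_pair_add_two [Finite W] (hxy : M.Adj x y) :
    (M.deleteVerts {x, y}).verts.ncard + 2 = M.verts.ncard := by
  rw [deleteVerts_verts, ← Set.ncard_pair hxy.ne, Set.ncard_sdiff_add_ncard_of_subset]
  exact Set.insert_subset hxy.fst_mem (Set.singleton_subset_iff.mpr hxy.snd_mem)

lemma IsMatching.exists_isMatching_between [Finite W] {k : ℕ} (hN : N.IsMatching)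
    (hP : P.IsMatching) (hPN : P ≤ N) (hPk : P.verts.ncard ≤ 2 * k)
    (hkN : 2 * k ≤ N.verts.ncard) :
    ∃ K : H.Subgraph, P ≤ K ∧ K ≤ N ∧ K.IsMatching ∧ K.verts.ncard = 2 * k := by
  induction hn : N.verts.ncard using Nat.strong_induction_on generalizing N with
  | _ n ih =>
  rcases hkN.eq_or_lt with h | h
  · exact ⟨N, hPN, le_rfl, hN, h.symm⟩
  obtain ⟨u, huN, huP⟩ := Set.exists_mem_notMem_of_ncard_lt_ncard (hPk.trans_lt h)
  obtain ⟨v, huv, -⟩ := hN huN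
  have hvP := hP.notMem_verts_of_adj hN hPN huv huP
  have hcard := ncard_verts_deleteVerts_pair_add_two huv
  have hk2 : 2 * k + 2 ≤ N.verts.ncard := by
    obtain ⟨j, hj⟩ := hN.even_ncard_verts
    omega
  obtain ⟨K, hPK, hKN, hK⟩ := ih _ (by omega) (hN.deleteVerts_pair huv)
    (le_deleteVerts hPN (by simp [Set.disjoint_insert_right, huP, hvP])) (by omega) rfl
  exact ⟨K, hPK, hKN.trans deleteVerts_le, hK⟩

lemma IsMatching.ncard_neighborSet_le_one [Finite W] (hM : M.IsMatching) (x : W) :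
    (M.neighborSet x).ncard ≤ 1 :=
  (Set.ncard_le_one_iff (Set.toFinite _)).mpr fun ha hb => hM.eq_of_adj_left ha hb

lemma IsMatching.exists_isMatching_sup_subgraphOfAdj_le [Finite W] {F : H.Subgraph}
    (hF : F.IsMatching) (hP : P.IsMatching) (hPF : P ≤ F) (hxy : H.Adj x y)
    (hx : x ∉ P.verts) (hy : y ∉ P.verts) :
    ∃ N : H.Subgraph, N.IsMatching ∧ P ⊔ H.subgraphOfAdj hxy ≤ N ∧
      F.verts.ncard ≤ N.verts.ncard + 2 := by
  set s : Set W := insert x (insert y (F.neighborSet x ∪ F.neighborSet y)) with hs_def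
  have hxs : x ∈ s := Set.mem_insert x _
  have hys : y ∈ s := Set.mem_insert_of_mem x (Set.mem_insert y _)
  have hs : ∀ ⦃u v⦄, F.Adj u v → u ∈ s → v ∈ s := by
    intro u v huv hu
    simp only [hs_def, Set.mem_insert_iff, Set.mem_union, mem_neighborSet] at hu ⊢
    rcases hu with rfl | rfl | hu | hu
    · exact .inr (.inr (.inl huv))
    · exact .inr (.inr (.inr huv))
    · exact .inl (hF.eq_of_adj_left hu.symm huv).symm
    · exact .inr (.inl (hF.eq_of_adj_left hu.symm huv).symm)
  have hPs : Disjoint P.verts s := by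
    refine Set.disjoint_right.mpr fun v hv => ?_
    simp only [hs_def, Set.mem_insert_iff, Set.mem_union, mem_neighborSet] at hv
    rcases hv with rfl | rfl | hv | hv
    · exact hx
    · exact hy
    · exact hP.notMem_verts_of_adj hF hPF hv hx
    · exact hP.notMem_verts_of_adj hF hPF hv hy
  refine ⟨F.deleteVerts s ⊔ H.subgraphOfAdj hxy,
    (hF.deleteVerts hs).sup_subgraphOfAdj hxy (fun h => h.2 hxs) (fun h => h.2 hys),
    sup_le_sup_right (le_deleteVerts hPF hPs) _, ?_⟩
  have hdisj : Disjoint (F.verts \ s) {x, y} := by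
    simp [Set.disjoint_insert_right, hxs, hys]
  have hs4 : s.ncard ≤ 4 := calc
    s.ncard ≤ (F.neighborSet x ∪ F.neighborSet y).ncard + 1 + 1 :=
      (Set.ncard_insert_le _ _).trans (Nat.add_le_add_right (Set.ncard_insert_le _ _) 1)
    _ ≤ (F.neighborSet x).ncard + (F.neighborSet y).ncard + 1 + 1 := by
      gcongr; exact Set.ncard_union_le _ _
    _ ≤ 4 := by
      have := hF.ncard_neighborSet_le_one x
      have := hF.ncard_neighborSet_le_one y
      omega
  rw [verts_sup, deleteVerts_verts, subgraphOfAdj_verts, Set.ncard_union_eq hdisj,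
    Set.ncard_pair hxy.ne]
  have := Set.ncard_le_ncard_sdiff_add_ncard F.verts s
  omega

theorem IsMatching.exists_le_isDefectMatching [Finite W] {k d : ℕ}
    (hW : 2 * k + d + 2 ≤ Nat.card W) (hex : ∃ K : H.Subgraph, IsKMatching K k)
    (hext : ∀ K : H.Subgraph, IsKMatching K k → ∃ F, K ≤ F ∧ IsDefectMatching F d)
    (hM : M.IsMatching) (hMk : M.verts.ncard ≤ 2 * k) : ∃ F, M ≤ F ∧ IsDefectMatching F d := by
  induction hn : M.verts.ncard using Nat.strong_induction_on generalizing M with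
  | _ n ih =>
  rcases M.verts.eq_empty_or_nonempty with hM0 | ⟨x, hx⟩
  · obtain ⟨K, hK⟩ := hex
    obtain ⟨F, -, hF⟩ := hext K hK
    exact ⟨F, (M.eq_bot_iff_verts_eq_empty.mpr hM0).trans_le bot_le, hF⟩
  obtain ⟨y, hxy, -⟩ := hM hx
  have hcard := ncard_verts_deleteVerts_pair_add_two hxy
  obtain ⟨F, hF, hFd⟩ := ih _ (by omega) (hM.deleteVerts_pair hxy) (by omega) rfl
  obtain ⟨N, hN, hFN, hFN_card⟩ := hFd.1.exists_isMatching_sup_subgraphOfAdj_le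
    (hM.deleteVerts_pair hxy) hF (M.adj_sub hxy) (fun h => h.2 (.inl rfl))
    (fun h => h.2 (.inr rfl))
  obtain ⟨K, hMK, -, hK⟩ := hN.exists_isMatching_between hM
    ((hM.le_deleteVerts_sup_subgraphOfAdj hxy).trans hFN) hMk (by have := hFd.2; omega)
  obtain ⟨F', hKF', hF'⟩ := hext K hK
  exact ⟨F', hMK.trans hKF', hF'⟩

end

section

variable {V : Type*} {G : SimpleGraph V} {A : Set V}

lemma ncard_verts_map_induce (M : (G.induce A).Subgraph) :
    (M.map (Embedding.induce A).toHom).verts.ncard = M.verts.ncard :=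
  Set.ncard_image_of_injective _ Subtype.val_injective

lemma verts_map_induce_subset (M : (G.induce A).Subgraph) :
    (M.map (Embedding.induce A).toHom).verts ⊆ A := by
  rintro _ ⟨v, -, rfl⟩
  exact v.2

lemma IsMatching.comap_induce {M : G.Subgraph} (hM : M.IsMatching) (hA : M.verts ⊆ A) :
    (M.comap (Embedding.induce A).toHom).IsMatching := by
  intro u hu
  obtain ⟨w, huw, hw⟩ := hM hu
  exact ⟨⟨w, hA huw.snd_mem⟩, ⟨M.adj_sub huw, huw⟩, fun w' hw' => Subtype.ext (hw w' hw'.2)⟩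

lemma ncard_verts_comap_induce {M : G.Subgraph} (hA : M.verts ⊆ A) :
    (M.comap (Embedding.induce A).toHom).verts.ncard = M.verts.ncard :=
  Set.ncard_preimage_of_injective_subset_range Subtype.val_injective
    fun v hv => ⟨⟨v, hA hv⟩, rfl⟩

lemma le_map_comap_induce {M : G.Subgraph} (hA : M.verts ⊆ A) :
    M ≤ (M.comap (Embedding.induce A).toHom).map (Embedding.induce A).toHom :=
  ⟨fun v hv => ⟨⟨v, hA hv⟩, hv, rfl⟩,
    fun a b hab => ⟨⟨a, hA hab.fst_mem⟩, ⟨b, hA hab.snd_mem⟩, ⟨M.adj_sub hab, hab⟩, rfl, rfl⟩⟩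

end

end SimpleGraph.Subgraph

section

open Subgraph

variable {V : Type*} {G : SimpleGraph V} {S : Finset V} {n k d : ℕ}

lemma Nat.card_compl_coe_finset [Finite V] (S : Finset V) :
    Nat.card ↥((S : Set V)ᶜ) = Nat.card V - S.card := by
  rw [Nat.card_coe_set_eq, Set.ncard_compl, Set.ncard_coe_finset]

/-- Matchings of `G - S` are encoded as matchings of `G` whose vertices avoid `S`. -/
def ExtendsAvoiding (G : SimpleGraph V) (S : Finset V) (k d : ℕ) : Prop :=
  ∀ M : G.Subgraph, M.IsMatching → M.verts ⊆ (↑S)ᶜ → M.verts.ncard ≤ 2 * k →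
    ∃ F : G.Subgraph, M ≤ F ∧ F.IsMatching ∧ F.verts ⊆ (↑S)ᶜ ∧
      F.verts.ncard + S.card + d = Nat.card V

lemma IsNkdGraph.extendsAvoiding [Fintype V] (hG : IsNkdGraph G n k d) (hS : S.card = n) :
    ExtendsAvoiding G S k d := by
  obtain ⟨hV, -, hG⟩ := hG
  obtain ⟨hex, hext⟩ := hG S hS
  intro M hM hMS hMk
  have hcard := Nat.card_compl_coe_finset S
  obtain ⟨F, hMF, hF, hFcard⟩ := (hM.comap_induce hMS).exists_le_isDefectMatching (by omega)
    hex hext (by rwa [ncard_verts_comap_induce hMS])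
  refine ⟨F.map (Embedding.induce _).toHom, (le_map_comap_induce hMS).trans (map_mono hMF),
    hF.map _ Subtype.val_injective, verts_map_induce_subset F, ?_⟩
  rw [ncard_verts_map_induce, hFcard]
  omega

lemma subset_compl_insert_insert {s : Set V} [DecidableEq V] {x y : V} (hs : s ⊆ (↑S)ᶜ)
    (hx : x ∉ s) (hy : y ∉ s) : s ⊆ (↑(insert x (insert y S)))ᶜ := by
  intro v hv
  simp only [Finset.coe_insert, Set.mem_compl_iff, Set.mem_insert_iff, not_or]
  exact ⟨fun h => hx (h ▸ hv), fun h => hy (h ▸ hv), hs hv⟩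

lemma exists_adj_notMem_of_extendsAvoiding_insert_insert [Finite V] [DecidableEq V]
    (hV : S.card + 2 * k + d + 4 ≤ Nat.card V)
    (h : ∀ x y, x ∉ S → y ∉ S → x ≠ y → ExtendsAvoiding G (insert x (insert y S)) k d)
    {M : G.Subgraph} (hM : M.IsMatching) (hMS : M.verts ⊆ (↑S)ᶜ) (hMk : M.verts.ncard ≤ 2 * k) :
    ∃ u v, G.Adj u v ∧ u ∉ S ∧ v ∉ S ∧ u ∉ M.verts ∧ v ∉ M.verts := by
  obtain ⟨x, y, hx, hy, hxy⟩ : ∃ x y, x ∉ ↑S ∪ M.verts ∧ y ∉ ↑S ∪ M.verts ∧ x ≠ y := by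
    have hlt : 1 < (↑S ∪ M.verts)ᶜ.ncard := by
      have := Set.ncard_union_le (↑S) M.verts
      have := Set.ncard_add_ncard_compl (↑S ∪ M.verts)
      rw [Set.ncard_coe_finset] at *
      omega
    simpa using (Set.one_lt_ncard_iff (Set.toFinite _)).mp hlt
  simp only [Set.mem_union, Finset.mem_coe, not_or] at hx hy
  obtain ⟨F, hMF, hF, hFS, hFcard⟩ :=
    h x y hx.1 hy.1 hxy M hM (subset_compl_insert_insert hMS hx.2 hy.2) hMk
  rw [Finset.card_insert_of_notMem (by simp [hx.1, hxy]), Finset.card_insert_of_notMem hy.1]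
    at hFcard
  obtain ⟨u, huF, huM⟩ := Set.exists_mem_notMem_of_ncard_lt_ncard (s := M.verts) (t := F.verts)
    (by omega)
  obtain ⟨v, huv, -⟩ := hF huF
  have hFS' : F.verts ⊆ (↑S)ᶜ := hFS.trans (Set.compl_subset_compl.mpr <|
    Finset.coe_subset.mpr ((S.subset_insert y).trans (Finset.subset_insert _ _)))
  exact ⟨u, v, F.adj_sub huv, hFS' huF, hFS' huv.snd_mem, huM,
    hM.notMem_verts_of_adj hF hMF huv huM⟩

lemma ExtendsAvoiding.of_insert_insert [Finite V] [DecidableEq V]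
    (hV : S.card + 2 * k + d + 4 ≤ Nat.card V)
    (h : ∀ x y, x ∉ S → y ∉ S → x ≠ y → ExtendsAvoiding G (insert x (insert y S)) k d) :
    ExtendsAvoiding G S k d := by
  intro M hM hMS hMk
  obtain ⟨u, v, huv, huS, hvS, huM, hvM⟩ :=
    exists_adj_notMem_of_extendsAvoiding_insert_insert hV h hM hMS hMk
  obtain ⟨F, hMF, hF, hFS, hFcard⟩ :=
    h u v huS hvS huv.ne M hM (subset_compl_insert_insert hMS huM hvM) hMk
  have huF : u ∉ F.verts := fun hu => hFS hu (by simp)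
  have hvF : v ∉ F.verts := fun hv => hFS hv (by simp)
  refine ⟨F ⊔ G.subgraphOfAdj huv, le_sup_of_le_left hMF, hF.sup_subgraphOfAdj huv huF hvF,
    ?_, ?_⟩
  · rw [verts_sup, subgraphOfAdj_verts]
    refine Set.union_subset (hFS.trans (Set.compl_subset_compl.mpr ?_)) ?_
    · exact Finset.coe_subset.mpr ((S.subset_insert v).trans (Finset.subset_insert _ _))
    · simp [Set.insert_subset_iff, huS, hvS]
  · rw [verts_sup, subgraphOfAdj_verts, Set.ncard_union_eq (by simp [huF, hvF]),
      Set.ncard_pair huv.ne, ← hFcard, Finset.card_insert_of_notMem (by simp [huS, huv.ne]),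
      Finset.card_insert_of_notMem hvS]
    omega

lemma IsNkdGraph.extendsAvoiding_of_card_add_two_mul [Fintype V] [DecidableEq V]
    (hG : IsNkdGraph G n k d) : ∀ m (S : Finset V), S.card + 2 * m = n → ExtendsAvoiding G S k d
  | 0, _, hS => hG.extendsAvoiding hS
  | m + 1, S, hS => .of_insert_insert (by have := hG.1; omega) fun x y hx hy hxy =>
    hG.extendsAvoiding_of_card_add_two_mul m _ <| by
      rw [Finset.card_insert_of_notMem (by simp [hx, hxy]), Finset.card_insert_of_notMem hy]
      omega

lemma ExtendsAvoiding.exists_isKMatching [Finite V] {k' : ℕ} (hS : ExtendsAvoiding G S k d)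
    (hV : S.card + 2 * k' + d ≤ Nat.card V) :
    ∃ M : (G.induce (↑S)ᶜ).Subgraph, IsKMatching M k' := by
  obtain ⟨F, -, hF, hFS, hFcard⟩ := hS ⊥ (by simp [IsMatching]) (by simp) (by simp)
  obtain ⟨K, -, -, hK⟩ := (hF.comap_induce hFS).exists_isMatching_between (P := ⊥) (k := k')
    (by simp [IsMatching]) bot_le (by simp) (by rw [ncard_verts_comap_induce hFS]; omega)
  exact ⟨K, hK⟩

lemma ExtendsAvoiding.exists_le_isDefectMatching [Finite V] {k' : ℕ}
    (hS : ExtendsAvoiding G S k d) (hk : k' ≤ k) {M : (G.induce (↑S)ᶜ).Subgraph}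
    (hM : IsKMatching M k') : ∃ F, M ≤ F ∧ IsDefectMatching F d := by
  obtain ⟨F, hMF, hF, hFS, hFcard⟩ := hS _ (hM.1.map _ Subtype.val_injective)
    (verts_map_induce_subset M) (by rw [ncard_verts_map_induce, hM.2]; omega)
  refine ⟨F.comap (Embedding.induce _).toHom, (Subgraph.map_le_iff_le_comap _ _ _).mp hMF,
    hF.comap_induce hFS, ?_⟩
  rw [ncard_verts_comap_induce hFS, Nat.card_compl_coe_finset]
  omega

end

theorem stmt_1 {V : Type*} [Fintype V] (G : SimpleGraph V) (n k d n' k' : ℕ)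
    (hG : IsNkdGraph G n k d) (hn : n' ≤ n) (hk : k' ≤ k) (hpar : n' % 2 = n % 2) :
    IsNkdGraph G n' k' d := by
  classical
  obtain ⟨m, rfl⟩ : ∃ m, n = n' + 2 * m := ⟨(n - n') / 2, by omega⟩
  have hV := hG.1
  refine ⟨by omega, ?_, fun S hS => ?_⟩
  · rw [show Nat.card V - n' - d = Nat.card V - (n' + 2 * m) - d + 2 * m by omega]
    exact hG.2.1.add (even_two_mul m)
  · have hext := hG.extendsAvoiding_of_card_add_two_mul m S (by omega)
    exact ⟨hext.exists_isKMatching (by omega), fun M hM => hext.exists_le_isDefectMatching hk hM⟩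
end

section
/- Let G be an (n,k,0)-graph with n ≥ 2 and k ≥ 1. Then for any edge e of G, the graph G−e obtained by deleting the edge e is an (n−2, k, 0)-graph. -/
/-!
Let `M` be a `k`-matching of `(G - uv) - S` with `|S| = n - 2`, and call a vertex outside `S`
free if `M` misses it. For free `y ≠ z`, the `(n,k,0)` property at `S ∪ {y, z}` extends `M` to a
perfect matching of `G - S - {y, z}`; if `yz` is an edge, adding it gives a perfect matching of
`G - S` through `M`. Such a free edge always exists: in that extension a third free vertex `p`
is matched to a free vertex. It remains to avoid `uv`. If `u` or `v` is covered by `M`, no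
extension of `M` uses `uv`, since `M` does not. If both are free, extend at `S ∪ {v, y}`: `u`
gets a free partner `x ≠ v`, and closing up with `ux` keeps `u` away from `v`. A `k`-matching of
`(G - uv) - S` is one of `G - T` for any `T ⊇ S ∪ {u}` of size `n`.
-/

open SimpleGraph

open Function

namespace SimpleGraph.Subgraph

variable {V W : Type*} {G : SimpleGraph V} {G' : SimpleGraph W}

section Comap

variable {f : G' →g G}

lemma ncard_map_verts (hf : Injective f) (M : G'.Subgraph) :
    (M.map f).verts.ncard = M.verts.ncard :=
  Set.ncard_image_of_injective _ hf

lemma ncard_comap_verts (hf : Injective f) {N : G.Subgraph} (hN : N.verts ⊆ Set.range f) :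
    (N.comap f).verts.ncard = N.verts.ncard :=
  Set.ncard_preimage_of_injective_subset_range hf hN

protected lemma IsMatching.comap (hf : Injective f) {N : G.Subgraph} (hN : N.IsMatching)
    (hrange : N.verts ⊆ Set.range f) (hadj : ∀ a b, N.Adj (f a) (f b) → G'.Adj a b) :
    (N.comap f).IsMatching := by
  intro a ha
  obtain ⟨w, hw, hw_unique⟩ := hN ha
  obtain ⟨b, rfl⟩ := hrange (N.edge_vert hw.symm)
  exact ⟨b, ⟨hadj a b hw, hw⟩, fun c hc => hf (hw_unique _ hc.2)⟩

lemma le_map_comap {N : G.Subgraph} (hrange : N.verts ⊆ Set.range f)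
    (hadj : ∀ a b, N.Adj (f a) (f b) → G'.Adj a b) : N ≤ (N.comap f).map f := by
  constructor
  · intro x hx
    obtain ⟨a, rfl⟩ := hrange hx
    exact ⟨a, hx, rfl⟩
  · intro x y hxy
    obtain ⟨a, rfl⟩ := hrange (N.edge_vert hxy)
    obtain ⟨b, rfl⟩ := hrange (N.edge_vert hxy.symm)
    exact ⟨a, b, ⟨hadj a b hxy, hxy⟩, rfl, rfl⟩

end Comap

lemma IsMatching.adj_of_le_of_mem_verts {M N : G.Subgraph} {u v : V} (hM : M.IsMatching)
    (hN : N.IsMatching) (hMN : M ≤ N) (hu : u ∈ M.verts) (huv : N.Adj u v) : M.Adj u v := by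
  obtain ⟨w, huw, -⟩ := hM hu
  rwa [hN.eq_of_adj_left huv (hMN.2 huw)]

end SimpleGraph.Subgraph

namespace SimpleGraph

variable {V : Type*} {G H : SimpleGraph V}

def Hom.induceOfLE (h : H ≤ G) (s : Set V) : H.induce s →g G :=
  (Hom.ofLE h).comp (Embedding.induce s).toHom

lemma Hom.induceOfLE_injective (h : H ≤ G) (s : Set V) : Injective (induceOfLE h s) :=
  Subtype.val_injective

lemma Hom.range_induceOfLE (h : H ≤ G) (s : Set V) : Set.range (induceOfLE h s) = s :=
  Subtype.range_coe

end SimpleGraph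

section Extension

variable {V : Type*} {G : SimpleGraph V}

def IsKMatchingAvoiding (M : G.Subgraph) (k : ℕ) (S : Finset V) : Prop :=
  M.IsMatching ∧ M.verts.ncard = 2 * k ∧ M.verts ⊆ (↑S)ᶜ

/-- The extension property of an `(n,k,0)`-graph, phrased with subgraphs of `G` itself instead
of subgraphs of the induced graphs `G - S`. -/
def KMatchingExtendable (G : SimpleGraph V) (n k : ℕ) : Prop :=
  ∀ S : Finset V, S.card = n → ∀ M : G.Subgraph, IsKMatchingAvoiding M k S →
    ∃ N : G.Subgraph, M ≤ N ∧ N.IsMatching ∧ N.verts = (↑S)ᶜ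

lemma IsNkdGraph.kMatchingExtendable [Fintype V] {n k : ℕ} (hG : IsNkdGraph G n k 0) :
    KMatchingExtendable G n k := by
  intro S hS M ⟨hM, hMcard, hMS⟩
  set ι := Hom.induceOfLE (le_refl G) ((↑S)ᶜ : Set V)
  have hι := Hom.induceOfLE_injective (le_refl G) ((↑S)ᶜ : Set V)
  have hrange : M.verts ⊆ Set.range ι := by rwa [Hom.range_induceOfLE]
  have hadj : ∀ a b, M.Adj (ι a) (ι b) → (G.induce (↑S)ᶜ).Adj a b := fun a b h => M.adj_sub h
  obtain ⟨M', hle, hM', hM'card⟩ := (hG.2.2 S hS).2 (M.comap ι)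
    ⟨hM.comap hι hrange hadj, by rw [Subgraph.ncard_comap_verts hι hrange, hMcard]⟩
  have hM'univ : M'.verts = Set.univ := by
    rw [Set.eq_univ_iff_ncard, hM'card, Nat.sub_zero]
  refine ⟨M'.map ι, (Subgraph.le_map_comap hrange hadj).trans (Subgraph.map_monotone hle),
    hM'.map ι hι, ?_⟩
  rw [Subgraph.map_verts, hM'univ, Set.image_univ, Hom.range_induceOfLE]

end Extension

namespace KMatchingExtendable

variable {V : Type*} [DecidableEq V] {G : SimpleGraph V} {m k : ℕ} {S : Finset V}
  {M : G.Subgraph}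

lemma exists_extension_sdiff_pair (h : KMatchingExtendable G (m + 2) k) (hS : S.card = m)
    (hM : IsKMatchingAvoiding M k S) {y z : V} (hy : y ∈ (↑S)ᶜ \ M.verts)
    (hz : z ∈ (↑S)ᶜ \ M.verts) (hyz : y ≠ z) :
    ∃ N : G.Subgraph, M ≤ N ∧ N.IsMatching ∧ N.verts = (↑S)ᶜ \ {y, z} := by
  have hyS : y ∉ S := hy.1
  have hzS : z ∉ S := hz.1
  have hT : (insert y (insert z S)).card = m + 2 := by
    rw [Finset.card_insert_of_notMem (by simp [hyz, hyS]), Finset.card_insert_of_notMem hzS, hS]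
  have hTc : (↑(insert y (insert z S)) : Set V)ᶜ = (↑S)ᶜ \ {y, z} := by
    ext x
    simp only [Finset.coe_insert, Set.mem_compl_iff, Set.mem_insert_iff, Set.mem_sdiff,
      Finset.mem_coe, Set.mem_singleton_iff]
    tauto
  obtain ⟨hM, hMcard, hMS⟩ := hM
  rw [← hTc]
  refine h _ hT M ⟨hM, hMcard, hTc ▸ fun x hx => ⟨hMS hx, ?_⟩⟩
  rintro (rfl | rfl)
  exacts [hy.2 hx, hz.2 hx]

lemma exists_extension_adj (h : KMatchingExtendable G (m + 2) k) (hS : S.card = m)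
    (hM : IsKMatchingAvoiding M k S) {p q : V} (hpq : G.Adj p q) (hp : p ∈ (↑S)ᶜ \ M.verts)
    (hq : q ∈ (↑S)ᶜ \ M.verts) :
    ∃ N : G.Subgraph, M ≤ N ∧ N.IsMatching ∧ N.verts = (↑S)ᶜ ∧ N.Adj p q := by
  obtain ⟨N, hMN, hN, hNverts⟩ := h.exists_extension_sdiff_pair hS hM hp hq hpq.ne
  have hdisj : Disjoint N.support (G.subgraphOfAdj hpq).support := by
    rw [hN.support_eq_verts, hNverts]
    exact Set.disjoint_sdiff_left.mono_right (Subgraph.support_subset_verts _)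
  refine ⟨N ⊔ G.subgraphOfAdj hpq, hMN.trans le_sup_left,
    hN.sup (.subgraphOfAdj hpq) hdisj, ?_, Or.inr (by simp)⟩
  rw [Subgraph.verts_sup, hNverts, subgraphOfAdj_verts]
  exact Set.sdiff_union_of_subset (Set.insert_subset hp.1 (Set.singleton_subset_iff.2 hq.1))

lemma exists_extension_adj_ne (h : KMatchingExtendable G (m + 2) k) (hS : S.card = m)
    (hM : IsKMatchingAvoiding M k S) {p y z : V} (hp : p ∈ (↑S)ᶜ \ M.verts)
    (hy : y ∈ (↑S)ᶜ \ M.verts) (hz : z ∈ (↑S)ᶜ \ M.verts) (hpy : p ≠ y) (hpz : p ≠ z)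
    (hyz : y ≠ z) :
    ∃ N : G.Subgraph, M ≤ N ∧ N.IsMatching ∧ N.verts = (↑S)ᶜ ∧ ∃ x ≠ z, N.Adj p x := by
  obtain ⟨N₁, hMN₁, hN₁, hN₁verts⟩ := h.exists_extension_sdiff_pair hS hM hy hz hyz
  have hpN₁ : p ∈ N₁.verts := hN₁verts ▸ ⟨hp.1, by simp [hpy, hpz]⟩
  obtain ⟨x, hpx, -⟩ := hN₁ hpN₁
  have hx : x ∈ (↑S : Set V)ᶜ \ {y, z} := hN₁verts ▸ N₁.edge_vert hpx.symm
  have hxM : x ∉ M.verts := fun hxM =>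
    hp.2 (M.edge_vert (hM.1.adj_of_le_of_mem_verts hN₁ hMN₁ hxM hpx.symm).symm)
  obtain ⟨N, hMN, hN, hNverts, hNpx⟩ :=
    h.exists_extension_adj hS hM (N₁.adj_sub hpx) hp ⟨hx.1, hxM⟩
  exact ⟨N, hMN, hN, hNverts, x, fun hxz => hx.2 (by simp [hxz]), hNpx⟩

lemma exists_extension_not_adj (h : KMatchingExtendable G (m + 2) k) (hS : S.card = m)
    (hM : IsKMatchingAvoiding M k S) (hfree : 2 < ((↑S)ᶜ \ M.verts).ncard) {u v : V}
    (huv : u ≠ v) (hMuv : ¬ M.Adj u v) :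
    ∃ N : G.Subgraph, M ≤ N ∧ N.IsMatching ∧ N.verts = (↑S)ᶜ ∧ ¬ N.Adj u v := by
  have hfin : ((↑S)ᶜ \ M.verts).Finite := Set.finite_of_ncard_pos (by omega)
  by_cases hfree_uv : u ∈ (↑S)ᶜ \ M.verts ∧ v ∈ (↑S)ᶜ \ M.verts
  · obtain ⟨y, hy, hyuv⟩ := Set.exists_mem_notMem_of_ncard_lt_ncard
      ((Set.ncard_pair huv).trans_lt hfree) (Set.toFinite _)
    have hyu : u ≠ y := fun h => hyuv (by simp [h])
    have hyv : y ≠ v := fun h => hyuv (by simp [h])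
    obtain ⟨N, hMN, hN, hNverts, x, hxv, hux⟩ :=
      h.exists_extension_adj_ne hS hM hfree_uv.1 hy hfree_uv.2 hyu huv hyv
    exact ⟨N, hMN, hN, hNverts, hN.not_adj_left_of_ne hxv hux⟩
  · obtain ⟨p, hp, y, hy, z, hz, hpy, hpz, hyz⟩ := (Set.two_lt_ncard hfin).1 hfree
    obtain ⟨N, hMN, hN, hNverts, -⟩ := h.exists_extension_adj_ne hS hM hp hy hz hpy hpz hyz
    refine ⟨N, hMN, hN, hNverts, fun hNuv => ?_⟩
    -- `u` or `v` is covered by `M`, and `N` keeps the edge of `M` there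
    have hu : u ∈ (↑S : Set V)ᶜ := hNverts ▸ N.edge_vert hNuv
    have hv : v ∈ (↑S : Set V)ᶜ := hNverts ▸ N.edge_vert hNuv.symm
    have huv_M : u ∈ M.verts ∨ v ∈ M.verts := by
      by_contra! h'
      exact hfree_uv ⟨⟨hu, h'.1⟩, ⟨hv, h'.2⟩⟩
    rcases huv_M with huM | hvM
    · exact hMuv (hM.1.adj_of_le_of_mem_verts hN hMN huM hNuv)
    · exact hMuv (hM.1.adj_of_le_of_mem_verts hN hMN hvM hNuv.symm).symm

end KMatchingExtendable

namespace IsNkdGraph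

variable {V : Type*} [Fintype V] {G : SimpleGraph V} {m k : ℕ} {S : Finset V}

lemma exists_kMatching_deleteEdges (hG : IsNkdGraph G (m + 2) k 0) (hS : S.card = m)
    (u v : V) : ∃ M : ((G.deleteEdges {s(u, v)}).induce (↑S)ᶜ).Subgraph, IsKMatching M k := by
  classical
  obtain ⟨T, hST, hT⟩ := Finset.exists_superset_card_eq (s := insert u S) (n := m + 2)
    (by have := Finset.card_insert_le u S; omega)
    (by have := hG.1; rw [Nat.card_eq_fintype_card] at this; omega)
  obtain ⟨M₀, hM₀, hM₀card⟩ := (hG.2.2 T hT).1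
  have hTS : (↑T : Set V)ᶜ ⊆ (↑S)ᶜ :=
    Set.compl_subset_compl.2 fun x hx => hST (Finset.mem_insert_of_mem hx)
  have huT : u ∈ T := hST (Finset.mem_insert_self u S)
  -- no edge of `G - T` meets `u`, so none of them is `uv`
  let ψ : G.induce (↑T)ᶜ →g (G.deleteEdges {s(u, v)}).induce (↑S)ᶜ :=
    { toFun := Set.inclusion hTS
      map_rel' := fun {a b} hab => by
        refine deleteEdges_adj.2 ⟨hab, ?_⟩
        rw [Set.mem_singleton_iff, Sym2.eq_iff]
        rintro (⟨ha, -⟩ | ⟨-, hb⟩)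
        · exact a.2 ((show (a : V) = u from ha) ▸ huT)
        · exact b.2 ((show (b : V) = u from hb) ▸ huT) }
  have hψ : Injective ψ := Set.inclusion_injective hTS
  exact ⟨M₀.map ψ, hM₀.map ψ hψ, by rw [Subgraph.ncard_map_verts hψ, hM₀card]⟩

lemma exists_extension_deleteEdges (hG : IsNkdGraph G (m + 2) k 0) (hS : S.card = m)
    {u v : V} (huv : G.Adj u v) (M : ((G.deleteEdges {s(u, v)}).induce (↑S)ᶜ).Subgraph)
    (hM : IsKMatching M k) : ∃ M', M ≤ M' ∧ IsDefectMatching M' 0 := by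
  classical
  set φ := Hom.induceOfLE (G.deleteEdges_le {s(u, v)}) (↑S)ᶜ
  have hφ := Hom.induceOfLE_injective (G.deleteEdges_le {s(u, v)}) (↑S : Set V)ᶜ
  have hN₀ : IsKMatchingAvoiding (M.map φ) k S :=
    ⟨hM.1.map φ hφ, by rw [Subgraph.ncard_map_verts hφ, hM.2], by rintro _ ⟨a, -, rfl⟩; exact a.2⟩
  have hN₀uv : ¬ (M.map φ).Adj u v := by
    rintro ⟨a, b, hab, ha, hb⟩
    refine (deleteEdges_adj.1 (M.adj_sub hab)).2 (show s((a : V), b) ∈ {s(u, v)} from ?_)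
    rw [show (a : V) = u from ha, show (b : V) = v from hb]
    exact Set.mem_singleton _
  have hfree : 2 < ((↑S)ᶜ \ (M.map φ).verts).ncard := by
    have := hG.1
    rw [Set.ncard_sdiff hN₀.2.2, Set.ncard_compl, Set.ncard_coe_finset, hN₀.2.1, hS]
    omega
  obtain ⟨N, hle, hN, hNverts, hNuv⟩ :=
    hG.kMatchingExtendable.exists_extension_not_adj hS hN₀ hfree huv.ne hN₀uv
  have hrange : N.verts ⊆ Set.range φ := by rw [Hom.range_induceOfLE, hNverts]
  have hadj : ∀ a b, N.Adj (φ a) (φ b) → ((G.deleteEdges {s(u, v)}).induce (↑S)ᶜ).Adj a b := by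
    intro a b hab
    refine deleteEdges_adj.2 ⟨N.adj_sub hab, ?_⟩
    rw [Set.mem_singleton_iff, Sym2.eq_iff]
    rintro (⟨ha, hb⟩ | ⟨ha, hb⟩)
    · exact hNuv (by rw [← ha, ← hb]; exact hab)
    · exact hNuv (by rw [← ha, ← hb]; exact hab.symm)
  refine ⟨N.comap φ, (Subgraph.map_le_iff_le_comap _ _ _).1 hle, hN.comap hφ hrange hadj, ?_⟩
  rw [Subgraph.ncard_comap_verts hφ hrange, hNverts, Nat.card_coe_set_eq, Nat.sub_zero]

end IsNkdGraph

theorem stmt_4_general {V : Type*} [Fintype V] (G : SimpleGraph V) (n k : ℕ)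
    (hG : IsNkdGraph G n k 0) (hn : 2 ≤ n)
    (u v : V) (huv : G.Adj u v) :
    IsNkdGraph (G.deleteEdges {s(u, v)}) (n - 2) k 0 := by
  obtain ⟨m, rfl⟩ : ∃ m, n = m + 2 := ⟨n - 2, by omega⟩
  have ⟨hcard, ⟨r, hr⟩, _⟩ := hG
  refine ⟨by omega, ⟨r + 1, by omega⟩, fun S hS => ?_⟩
  rw [Nat.add_sub_cancel] at hS
  exact ⟨hG.exists_kMatching_deleteEdges hS u v, hG.exists_extension_deleteEdges hS huv⟩

theorem stmt_4 {V : Type*} [Fintype V] (G : SimpleGraph V) (n k : ℕ)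
    (hG : IsNkdGraph G n k 0) (hn : 2 ≤ n) (hk : 1 ≤ k)
    (u v : V) (huv : G.Adj u v) :
    IsNkdGraph (G.deleteEdges {s(u, v)}) (n - 2) k 0 :=
  stmt_4_general G n k hG hn u v huv
end

section
/- Let G be an (n,k,0)-graph with n ≥ 2 and k ≥ 1. Then for any edge e of G, the graph G−e obtained by deleting the edge e is an (n, k−1, 0)-graph. -/
/-!
Everything is transported to matchings of `G` itself whose vertices avoid `S`. A
`(k-1)`-matching of `G - e - S` comes from deleting one edge (`e`, if present) of a `k`-matching
of `G - S`. For the extension property, a `(k-1)`-matching `N` of `G - S` avoiding `e = uv` is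
enlarged by an edge disjoint from it (found by augmenting `N` along a perfect matching of
`G - S`) and then extended to a perfect matching `F`. If `F` uses `uv`, then `u, v` are not
covered by `N`; if one of them has another neighbour outside `N`, extending through that edge
instead avoids `uv`. Otherwise, exchanging a vertex of `S` with `v` and then with a vertex of a
further edge of `F` leaves `v` with no possible partner.
-/

open SimpleGraph

namespace SimpleGraph.Subgraph

variable {V : Type*} {G : SimpleGraph V} {N F : G.Subgraph} {x y z p q : V}

lemma IsMatching.sup_subgraphOfAdj_s5 (hN : N.IsMatching) (hpq : G.Adj p q)
    (hp : p ∉ N.verts) (hq : q ∉ N.verts) : (N ⊔ G.subgraphOfAdj hpq).IsMatching := by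
  refine hN.sup (.subgraphOfAdj hpq) ?_
  rw [hN.support_eq_verts, (IsMatching.subgraphOfAdj hpq).support_eq_verts, subgraphOfAdj_verts]
  exact Set.disjoint_insert_right.2 ⟨hp, Set.disjoint_singleton_right.2 hq⟩

lemma ncard_verts_sup_subgraphOfAdj [Finite V] (hpq : G.Adj p q) (hp : p ∉ N.verts)
    (hq : q ∉ N.verts) : (N ⊔ G.subgraphOfAdj hpq).verts.ncard = N.verts.ncard + 2 := by
  rw [verts_sup, subgraphOfAdj_verts, Set.union_insert, Set.union_singleton,
    Set.ncard_insert_of_notMem (by simp [hp, hpq.ne]), Set.ncard_insert_of_notMem hq]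

lemma IsMatching.deleteVerts_pair_s5 (hN : N.IsMatching) (hyz : N.Adj y z) :
    (N.deleteVerts {y, z}).IsMatching := by
  rintro x ⟨hx, hxyz⟩
  obtain ⟨w, hxw, hw⟩ := hN hx
  have hwyz : w ∉ ({y, z} : Set V) := by
    rintro (rfl | rfl)
    · exact hxyz (.inr (hN.eq_of_adj_right hxw hyz.symm))
    · exact hxyz (.inl (hN.eq_of_adj_right hxw hyz))
  exact ⟨w, deleteVerts_adj.2 ⟨hx, hxyz, N.edge_vert hxw.symm, hwyz, hxw⟩,
    fun w' h => hw w' (deleteVerts_adj.1 h).2.2.2.2⟩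

lemma IsMatching.exists_ncard_add_two_not_adj [Finite V] (hN : N.IsMatching)
    (hne : N.verts.Nonempty) (u v : V) :
    ∃ N' : G.Subgraph, N'.IsMatching ∧ N'.verts ⊆ N.verts ∧
      N'.verts.ncard + 2 = N.verts.ncard ∧ ¬N'.Adj u v := by
  obtain ⟨y, z, hyz, hyu⟩ : ∃ y z, N.Adj y z ∧ (N.Adj u v → y = u) := by
    by_cases huv : N.Adj u v
    · exact ⟨u, v, huv, fun _ => rfl⟩
    · obtain ⟨y, hy⟩ := hne
      obtain ⟨z, hyz, -⟩ := hN hy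
      exact ⟨y, z, hyz, fun h => absurd h huv⟩
  refine ⟨N.deleteVerts {y, z}, hN.deleteVerts_pair_s5 hyz, Set.sdiff_subset, ?_, fun h => ?_⟩
  · rw [deleteVerts_verts, ← Set.ncard_pair (N.adj_sub hyz).ne]
    exact Set.ncard_sdiff_add_ncard_of_subset
      (Set.insert_subset (N.edge_vert hyz) (Set.singleton_subset_iff.2 (N.edge_vert hyz.symm)))
  · obtain ⟨-, hu, -, -, huv⟩ := deleteVerts_adj.1 h
    exact hu (.inl (hyu huv).symm)

lemma IsMatching.exists_adj_notMem_of_le (hF : F.IsMatching) (hN : N.IsMatching) (hNF : N ≤ F)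
    (hx : x ∈ F.verts) (hxN : x ∉ N.verts) : ∃ w, F.Adj x w ∧ w ∉ N.verts := by
  obtain ⟨w, hxw, -⟩ := hF hx
  refine ⟨w, hxw, fun hwN => hxN ?_⟩
  obtain ⟨t, hwt, -⟩ := hN hwN
  rw [← hF.eq_of_adj_left (hNF.2 hwt) hxw.symm]
  exact N.edge_vert hwt.symm

/-- Trading the `N`-edge `yz` for the `F`-edge `xy`: one step along an alternating path. The
shrinking set of `F`-edges missing from `N` makes `exists_augment` terminate. -/
lemma IsMatching.exists_swap (hF : F.IsMatching) (hN : N.IsMatching) (hxN : x ∉ N.verts)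
    (hxy : F.Adj x y) (hyz : N.Adj y z) :
    ∃ N' : G.Subgraph, N'.IsMatching ∧ z ∉ N'.verts ∧ insert z N'.verts = insert x N.verts ∧
      {e : V × V | F.Adj e.1 e.2 ∧ ¬N'.Adj e.1 e.2} ⊂
        {e : V × V | F.Adj e.1 e.2 ∧ ¬N.Adj e.1 e.2} := by
  have hzN : z ∈ N.verts := N.edge_vert hyz.symm
  have hxz : x ≠ z := fun h => hxN (h ▸ hzN)
  have hyz' : y ≠ z := (N.adj_sub hyz).ne
  have hnot : ∀ a b, N.Adj a b → F.Adj a b → a ∉ ({y, z} : Set V) := by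
    rintro a b hab hFab (rfl | rfl)
    · exact hxz (hF.eq_of_adj_left hxy.symm (hN.eq_of_adj_left hyz hab ▸ hFab))
    · exact hxz (hF.eq_of_adj_right hxy (hN.eq_of_adj_left hyz.symm hab ▸ hFab))
  refine ⟨N.deleteVerts {y, z} ⊔ G.subgraphOfAdj (F.adj_sub hxy),
    (hN.deleteVerts_pair_s5 hyz).sup_subgraphOfAdj_s5 _ (fun h => hxN h.1) (fun h => h.2 (by simp)),
    ?_, ?_, (Set.ssubset_iff_of_subset ?_).2 ⟨(x, y), ⟨hxy, fun h => hxN (N.edge_vert h)⟩, ?_⟩⟩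
  · simp [hxz.symm, hyz'.symm]
  · ext a
    simp only [verts_sup, deleteVerts_verts, subgraphOfAdj_verts, Set.mem_insert_iff,
      Set.mem_union, Set.mem_sdiff, Set.mem_singleton_iff]
    have hyN : y ∈ N.verts := N.edge_vert hyz
    by_cases hay : a = y <;> by_cases haz : a = z <;> simp_all [or_comm]
  · rintro ⟨a, b⟩ ⟨hFab, hab⟩
    refine ⟨hFab, fun hNab => hab (.inl ?_)⟩
    exact deleteVerts_adj.2 ⟨N.edge_vert hNab, hnot a b hNab hFab, N.edge_vert hNab.symm,
      hnot b a hNab.symm hFab.symm, hNab⟩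
  · exact fun h => h.2 (.inr (subgraphOfAdj_adj_self _))

lemma IsMatching.exists_augment [Finite V] (hF : F.IsMatching) (hN : N.IsMatching)
    (hNF : N.verts ⊆ F.verts) (hx : x ∈ F.verts) (hxN : x ∉ N.verts) :
    ∃ P : G.Subgraph, P.IsMatching ∧ insert x N.verts ⊆ P.verts ∧ P.verts ⊆ F.verts ∧
      P.verts.ncard = N.verts.ncard + 2 := by
  induction hm : {e : V × V | F.Adj e.1 e.2 ∧ ¬N.Adj e.1 e.2}.ncard using Nat.strong_induction_on
    generalizing N x with
  | _ m ih =>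
  obtain ⟨y, hxy, -⟩ := hF hx
  by_cases hyN : y ∈ N.verts
  · obtain ⟨z, hyz, -⟩ := hN hyN
    obtain ⟨N', hN', hzN', hins, hlt⟩ := hF.exists_swap hN hxN hxy hyz
    have hN'F : N'.verts ⊆ F.verts :=
      (Set.subset_insert z _).trans (hins ▸ Set.insert_subset hx hNF)
    obtain ⟨P, hP, hzP, hPF, hPk⟩ :=
      ih _ (hm ▸ Set.ncard_lt_ncard hlt) hN' hN'F (hNF (N.edge_vert hyz.symm)) hzN' rfl
    have hcard := Set.ncard_insert_of_notMem hzN'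
    rw [hins, Set.ncard_insert_of_notMem hxN] at hcard
    exact ⟨P, hP, hins ▸ hzP, hPF, by omega⟩
  · have hGxy := F.adj_sub hxy
    refine ⟨N ⊔ G.subgraphOfAdj hGxy, hN.sup_subgraphOfAdj_s5 hGxy hxN hyN, ?_, ?_,
      ncard_verts_sup_subgraphOfAdj hGxy hxN hyN⟩
    · exact Set.insert_subset (by simp) fun a ha => by simp [ha]
    · simp [Set.insert_subset_iff, hNF, hx, F.edge_vert hxy.symm]

end SimpleGraph.Subgraph

namespace SimpleGraph

variable {V : Type*} {G : SimpleGraph V} {s : Set V} {k : ℕ}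
  {N P F F₀ : G.Subgraph} {u v p q y a b : V}

/-- `G[s]` is `k`-extendable, except that no `k`-matching is required to exist. -/
def IsExtendableOn (G : SimpleGraph V) (s : Set V) (k : ℕ) : Prop :=
  ∀ N : G.Subgraph, N.IsMatching → N.verts ⊆ s → N.verts.ncard = 2 * k →
    ∃ F : G.Subgraph, N ≤ F ∧ F.IsMatching ∧ F.verts = s

namespace IsExtendableOn

lemma exists_adj_notMem (hs : G.IsExtendableOn s k) (hP : P.IsMatching) (hPs : P.verts ⊆ s)
    (hPk : P.verts.ncard = 2 * k) (hy : y ∈ s) (hyP : y ∉ P.verts) :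
    ∃ w ∈ s, G.Adj y w ∧ w ∉ P.verts := by
  obtain ⟨F, hPF, hF, rfl⟩ := hs P hP hPs hPk
  obtain ⟨w, hyw, hwP⟩ := hF.exists_adj_notMem_of_le hP hPF hy hyP
  exact ⟨w, F.edge_vert hyw.symm, F.adj_sub hyw, hwP⟩

lemma adj_of_forall_adj_eq (ht : G.IsExtendableOn (insert a s \ {b}) k) (hP : P.IsMatching)
    (hPs : P.verts ⊆ insert a s \ {b}) (hPk : P.verts.ncard = 2 * k) (hy : y ∈ s) (hyb : y ≠ b)
    (hyP : y ∉ P.verts) (hy' : ∀ x ∈ s, G.Adj y x → x ∉ P.verts → x = b) :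
    G.Adj y a ∧ a ∉ P.verts := by
  obtain ⟨w, ⟨rfl | hws, hwb⟩, hyw, hwP⟩ :=
    ht.exists_adj_notMem hP hPs hPk (by simp [hy, hyb]) hyP
  · exact ⟨hyw, hwP⟩
  · exact absurd (hy' w hws hyw hwP) hwb

variable [Finite V]

lemma exists_sup_subgraphOfAdj_le (hs : G.IsExtendableOn s k) (hN : N.IsMatching)
    (hNs : N.verts ⊆ s) (hNk : N.verts.ncard + 2 = 2 * k) (hpq : G.Adj p q) (hp : p ∈ s)
    (hq : q ∈ s) (hpN : p ∉ N.verts) (hqN : q ∉ N.verts) :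
    ∃ F : G.Subgraph, N ⊔ G.subgraphOfAdj hpq ≤ F ∧ F.IsMatching ∧ F.verts = s :=
  hs _ (hN.sup_subgraphOfAdj_s5 hpq hpN hqN)
    (by simp [Set.insert_subset_iff, hNs, hp, hq])
    (by rw [Subgraph.ncard_verts_sup_subgraphOfAdj hpq hpN hqN, hNk])

/-- Augment `N` along `F₀` to a `k`-matching `P`, extend `P`, and take an edge of the extension
leaving `P`. -/
lemma exists_adj_notMem_of_ncard_add_two (hs : G.IsExtendableOn s k) (hF₀ : F₀.IsMatching)
    (hF₀s : F₀.verts = s) (hsk : 2 * k < s.ncard) (hN : N.IsMatching) (hNs : N.verts ⊆ s)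
    (hNk : N.verts.ncard + 2 = 2 * k) :
    ∃ p ∈ s, ∃ q ∈ s, G.Adj p q ∧ p ∉ N.verts ∧ q ∉ N.verts := by
  subst hF₀s
  obtain ⟨x, hx, hxN⟩ :=
    Set.exists_mem_notMem_of_ncard_lt_ncard (by omega : N.verts.ncard < F₀.verts.ncard)
  obtain ⟨P, hP, hNP, hPs, hPk⟩ := hF₀.exists_augment hN hNs hx hxN
  obtain ⟨p, hp, hpP⟩ :=
    Set.exists_mem_notMem_of_ncard_lt_ncard (by omega : P.verts.ncard < F₀.verts.ncard)
  obtain ⟨q, hq, hpq, hqP⟩ := hs.exists_adj_notMem hP hPs (by omega) hp hpP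
  exact ⟨p, hp, q, hq, hpq, fun h => hpP (hNP (.inr h)), fun h => hqP (hNP (.inr h))⟩

lemma exists_not_adj_of_adj (hs : G.IsExtendableOn s k) (hN : N.IsMatching)
    (hNs : N.verts ⊆ s) (hNk : N.verts.ncard + 2 = 2 * k) (huy : G.Adj u y) (hu : u ∈ s)
    (hy : y ∈ s) (huN : u ∉ N.verts) (hyN : y ∉ N.verts) (hyv : y ≠ v) :
    ∃ F : G.Subgraph, N ≤ F ∧ F.IsMatching ∧ F.verts = s ∧ ¬F.Adj u v := by
  obtain ⟨F, hNF, hF, hFs⟩ := hs.exists_sup_subgraphOfAdj_le hN hNs hNk huy hu hy huN hyN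
  exact ⟨F, le_sup_left.trans hNF, hF, hFs,
    hF.not_adj_left_of_ne hyv (hNF.2 (.inr (subgraphOfAdj_adj_self huy)))⟩

/-- The exchange argument. Pick an edge `pq` of `F` away from `N` and `uv`, and a vertex `a ∉ s`.
Exchanging `v` for `a` forces `u ~ a`; then exchanging `p` for `a` leaves `v` unmatched. -/
lemma false_of_forall_adj_eq (hswap : ∀ a ∉ s, ∀ b ∈ s, G.IsExtendableOn (insert a s \ {b}) k)
    (ha : a ∉ s) (hsk : 2 * k < s.ncard) (hN : N.IsMatching) (hNs : N.verts ⊆ s)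
    (hNk : N.verts.ncard + 2 = 2 * k) (hF : F.IsMatching) (hNF : N ≤ F) (hFs : F.verts = s)
    (hFuv : F.Adj u v) (huN : u ∉ N.verts) (hvN : v ∉ N.verts)
    (hu' : ∀ x ∈ s, G.Adj u x → x ∉ N.verts → x = v)
    (hv' : ∀ x ∈ s, G.Adj v x → x ∉ N.verts → x = u) : False := by
  have hu : u ∈ s := hFs ▸ F.edge_vert hFuv
  have hv : v ∈ s := hFs ▸ F.edge_vert hFuv.symm
  have huv := F.adj_sub hFuv
  have hNuv := hN.sup_subgraphOfAdj_s5 huv huN hvN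
  obtain ⟨p, hp, hpNuv⟩ := Set.exists_mem_notMem_of_ncard_lt_ncard
    (by rw [Subgraph.ncard_verts_sup_subgraphOfAdj huv huN hvN]; omega :
      (N ⊔ G.subgraphOfAdj huv).verts.ncard < s.ncard)
  obtain ⟨q, hpq, hqNuv⟩ := hF.exists_adj_notMem_of_le hNuv
    (sup_le hNF (subgraphOfAdj_le_of_adj F hFuv)) (hFs ▸ hp) hpNuv
  have hq : q ∈ s := hFs ▸ F.edge_vert hpq.symm
  replace hpq := F.adj_sub hpq
  simp only [Subgraph.verts_sup, subgraphOfAdj_verts, Set.mem_union, Set.mem_insert_iff,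
    Set.mem_singleton_iff, not_or] at hpNuv hqNuv
  obtain ⟨hpN, hpu, hpv⟩ := hpNuv
  obtain ⟨hqN, hqu, hqv⟩ := hqNuv
  have hsa : ∀ x ∈ s, x ≠ a := fun x hx h => ha (h ▸ hx)
  obtain ⟨hua, -⟩ := (hswap a ha v hv).adj_of_forall_adj_eq (hN.sup_subgraphOfAdj_s5 hpq hpN hqN)
    (by simp [Set.subset_def, hp, hq, hpv, hqv]
        exact fun x hx => ⟨.inr (hNs hx), by rintro rfl; exact hvN hx⟩)
    (by rw [Subgraph.ncard_verts_sup_subgraphOfAdj hpq hpN hqN, hNk])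
    hu huv.ne (by simp [huN, Ne.symm hpu, Ne.symm hqu])
    (fun x hx hux hxN => hu' x hx hux (fun h => hxN (.inl h)))
  obtain ⟨-, haN⟩ := (hswap a ha p hp).adj_of_forall_adj_eq
    (hN.sup_subgraphOfAdj_s5 hua huN (fun h => ha (hNs h)))
    (by simp [Set.subset_def, hu, Ne.symm hpu, Ne.symm (hsa p hp)]
        exact fun x hx => ⟨.inr (hNs hx), by rintro rfl; exact hpN hx⟩)
    (by rw [Subgraph.ncard_verts_sup_subgraphOfAdj hua huN (fun h => ha (hNs h)), hNk])
    hv (Ne.symm hpv) (by simp [hvN, huv.ne', hsa v hv])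
    (fun x hx hvx hxN => by
      obtain rfl := hv' x hx hvx (fun h => hxN (.inl h))
      simp at hxN)
  exact haN (by simp)

lemma exists_extension_not_adj (hs : G.IsExtendableOn s k)
    (hswap : ∀ a ∉ s, ∀ b ∈ s, G.IsExtendableOn (insert a s \ {b}) k) (ha : a ∉ s)
    (hF₀ : F₀.IsMatching) (hF₀s : F₀.verts = s) (hsk : 2 * k < s.ncard) (hN : N.IsMatching)
    (hNs : N.verts ⊆ s) (hNk : N.verts.ncard + 2 = 2 * k) (hNuv : ¬N.Adj u v) :
    ∃ F : G.Subgraph, N ≤ F ∧ F.IsMatching ∧ F.verts = s ∧ ¬F.Adj u v := by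
  obtain ⟨p, hp, q, hq, hpq, hpN, hqN⟩ :=
    hs.exists_adj_notMem_of_ncard_add_two hF₀ hF₀s hsk hN hNs hNk
  obtain ⟨F, hNF, hF, hFs⟩ := hs.exists_sup_subgraphOfAdj_le hN hNs hNk hpq hp hq hpN hqN
  replace hNF := le_sup_left.trans hNF
  by_cases hFuv : F.Adj u v
  swap
  · exact ⟨F, hNF, hF, hFs, hFuv⟩
  have huN : u ∉ N.verts := fun h => by
    obtain ⟨w, huw, -⟩ := hN h
    exact hNuv (hF.eq_of_adj_left (hNF.2 huw) hFuv ▸ huw)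
  have hvN : v ∉ N.verts := fun h => by
    obtain ⟨w, hvw, -⟩ := hN h
    exact hNuv (hF.eq_of_adj_left (hNF.2 hvw) hFuv.symm ▸ hvw).symm
  by_cases hu' : ∃ x ∈ s, G.Adj u x ∧ x ∉ N.verts ∧ x ≠ v
  · obtain ⟨x, hx, hux, hxN, hxv⟩ := hu'
    exact hs.exists_not_adj_of_adj hN hNs hNk hux (hFs ▸ F.edge_vert hFuv) hx huN hxN hxv
  by_cases hv' : ∃ x ∈ s, G.Adj v x ∧ x ∉ N.verts ∧ x ≠ u
  · obtain ⟨x, hx, hvx, hxN, hxu⟩ := hv'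
    obtain ⟨F', hNF', hF', hF's, hF'vu⟩ :=
      hs.exists_not_adj_of_adj hN hNs hNk hvx (hFs ▸ F.edge_vert hFuv.symm) hx hvN hxN hxu
    exact ⟨F', hNF', hF', hF's, fun h => hF'vu h.symm⟩
  push Not at hu' hv'
  exact (false_of_forall_adj_eq hswap ha hsk hN hNs hNk hF hNF hFs hFuv huN hvN hu' hv').elim

end IsExtendableOn

section Transfer

variable {V : Type*} {G G' : SimpleGraph V} {s : Set V} {k : ℕ}

/-- Pushing forward along this inclusion identifies subgraphs of `G'[s]` with the subgraphs
of `G` whose vertices lie in `s` and whose edges lie in `G'`. -/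
def induceValHom (h : G' ≤ G) (s : Set V) : G'.induce s →g G :=
  (Hom.ofLE h).comp (Embedding.induce s).toHom

variable {h : G' ≤ G}

@[simp] lemma coe_induceValHom : ⇑(induceValHom h s) = Subtype.val := rfl

lemma isMatching_map_induceValHom_iff {M : (G'.induce s).Subgraph} :
    (M.map (induceValHom h s)).IsMatching ↔ M.IsMatching := by
  refine ⟨fun hM x hx => ?_, .map _ Subtype.val_injective⟩
  obtain ⟨_, ⟨x', w, hxw, hx', rfl⟩, hw⟩ := hM ⟨x, hx, rfl⟩
  obtain rfl := Subtype.ext hx'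
  exact ⟨w, hxw, fun y hy => Subtype.ext (hw _ ⟨x', y, hy, rfl, rfl⟩)⟩

lemma ncard_verts_map_induceValHom (M : (G'.induce s).Subgraph) :
    (M.map (induceValHom h s)).verts.ncard = M.verts.ncard :=
  Set.ncard_image_of_injective _ Subtype.val_injective

lemma verts_map_induceValHom_subset (M : (G'.induce s).Subgraph) :
    (M.map (induceValHom h s)).verts ⊆ s := by
  rintro _ ⟨x, -, rfl⟩
  exact x.2

lemma spanningCoe_map_induceValHom_le (M : (G'.induce s).Subgraph) :
    (M.map (induceValHom h s)).spanningCoe ≤ G' := by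
  rintro _ _ ⟨x, y, hxy, rfl, rfl⟩
  exact M.adj_sub hxy

lemma map_comap_induceValHom {N : G.Subgraph} (hNs : N.verts ⊆ s) (hN : N.spanningCoe ≤ G') :
    (N.comap (induceValHom h s)).map (induceValHom h s) = N := by
  ext x y
  · exact ⟨fun ⟨x', hx', e⟩ => e ▸ hx', fun hx => ⟨⟨x, hNs hx⟩, hx, rfl⟩⟩
  · refine ⟨fun ⟨x', y', hxy', e, e'⟩ => e ▸ e' ▸ hxy'.2, fun hxy => ?_⟩
    exact ⟨⟨x, hNs (N.edge_vert hxy)⟩, ⟨y, hNs (N.edge_vert hxy.symm)⟩, ⟨hN hxy, hxy⟩, rfl, rfl⟩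

lemma isDefectMatching_zero_iff [Finite V] {M : (G'.induce s).Subgraph} :
    IsDefectMatching M 0 ↔
      (M.map (induceValHom h s)).IsMatching ∧ (M.map (induceValHom h s)).verts = s := by
  rw [IsDefectMatching, isMatching_map_induceValHom_iff, Nat.sub_zero, ← Set.eq_univ_iff_ncard]
  refine and_congr_right fun _ => ⟨fun hM => ?_, fun hM => Set.eq_univ_of_forall fun x => ?_⟩
  · simp [hM]
  · obtain ⟨y, hy, hyx⟩ : (x : V) ∈ (M.map (induceValHom h s)).verts := hM.symm ▸ x.2
    exact Subtype.ext hyx ▸ hy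

lemma exists_isKMatching_induce_iff (h : G' ≤ G) :
    (∃ M : (G'.induce s).Subgraph, IsKMatching M k) ↔
      ∃ N : G.Subgraph, N.IsMatching ∧ N.verts ⊆ s ∧ N.spanningCoe ≤ G' ∧
        N.verts.ncard = 2 * k := by
  refine ⟨fun ⟨M, hM, hMk⟩ => ⟨M.map (induceValHom h s), isMatching_map_induceValHom_iff.2 hM,
    verts_map_induceValHom_subset M, spanningCoe_map_induceValHom_le M,
    (ncard_verts_map_induceValHom M).trans hMk⟩, fun ⟨N, hN, hNs, hNG', hNk⟩ => ?_⟩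
  have hmap := map_comap_induceValHom (h := h) hNs hNG'
  refine ⟨N.comap (induceValHom h s), ?_, ?_⟩
  · rwa [← isMatching_map_induceValHom_iff (h := h), hmap]
  · rwa [← ncard_verts_map_induceValHom (h := h), hmap]

lemma forall_isKMatching_extends_induce_iff [Finite V] (h : G' ≤ G) :
    (∀ M : (G'.induce s).Subgraph, IsKMatching M k → ∃ M', M ≤ M' ∧ IsDefectMatching M' 0) ↔
      ∀ N : G.Subgraph, N.IsMatching → N.verts ⊆ s → N.spanningCoe ≤ G' →
        N.verts.ncard = 2 * k →
          ∃ F : G.Subgraph, N ≤ F ∧ F.IsMatching ∧ F.verts = s ∧ F.spanningCoe ≤ G' := by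
  constructor
  · intro hext N hN hNs hNG' hNk
    have hmap := map_comap_induceValHom (h := h) hNs hNG'
    obtain ⟨M', hNM', hM'⟩ := hext (N.comap (induceValHom h s))
      ⟨by rwa [← isMatching_map_induceValHom_iff (h := h), hmap],
        by rwa [← ncard_verts_map_induceValHom (h := h), hmap]⟩
    obtain ⟨hM'm, hM's⟩ := isDefectMatching_zero_iff.1 hM'
    exact ⟨M'.map (induceValHom h s), hmap ▸ Subgraph.map_mono hNM', hM'm, hM's,
      spanningCoe_map_induceValHom_le M'⟩
  · rintro hext M ⟨hM, hMk⟩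
    obtain ⟨F, hMF, hF, hFs, hFG'⟩ := hext (M.map (induceValHom h s))
      (isMatching_map_induceValHom_iff.2 hM) (verts_map_induceValHom_subset M)
      (spanningCoe_map_induceValHom_le M) ((ncard_verts_map_induceValHom M).trans hMk)
    have hmap := map_comap_induceValHom (h := h) hFs.le hFG'
    exact ⟨F.comap (induceValHom h s), (Subgraph.map_le_iff_le_comap _ _ _).1 hMF,
      isDefectMatching_zero_iff.2 (by rw [hmap]; exact ⟨hF, hFs⟩)⟩

lemma isExtendableOn_iff_forall_isKMatching [Finite V] :
    G.IsExtendableOn s k ↔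
      ∀ M : (G.induce s).Subgraph, IsKMatching M k → ∃ M', M ≤ M' ∧ IsDefectMatching M' 0 := by
  simp [forall_isKMatching_extends_induce_iff le_rfl, IsExtendableOn, Subgraph.spanningCoe_le]

end Transfer

lemma Subgraph.spanningCoe_le_deleteEdges_iff {V : Type*} {G : SimpleGraph V} {N : G.Subgraph}
    {u v : V} : N.spanningCoe ≤ G.deleteEdges {s(u, v)} ↔ ¬N.Adj u v := by
  refine ⟨fun h huv => by simpa using h huv, fun h x y hxy => ?_⟩
  rw [SimpleGraph.deleteEdges_adj, Set.mem_singleton_iff, Sym2.eq_iff]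
  refine ⟨N.adj_sub hxy, ?_⟩
  rintro (⟨rfl, rfl⟩ | ⟨rfl, rfl⟩)
  exacts [h hxy, h hxy.symm]

end SimpleGraph

lemma Finset.insert_compl_sdiff_of_forall_card_eq {V : Type*} {P : Set V → Prop} {n : ℕ}
    (hP : ∀ T : Finset V, T.card = n → P (↑T)ᶜ) {S : Finset V} (hS : S.card = n) {a b : V}
    (ha : a ∈ S) (hb : b ∉ S) : P (insert a (↑S)ᶜ \ {b}) := by
  classical
  convert hP (insert b (S.erase a)) (by
    rw [Finset.card_insert_of_notMem (fun h => hb (Finset.mem_of_mem_erase h)),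
      Finset.card_erase_add_one ha, hS]) using 1
  ext x
  simp only [Set.mem_sdiff, Set.mem_insert_iff, Set.mem_compl_iff, Finset.coe_insert,
    Finset.coe_erase, Finset.mem_coe, Set.mem_singleton_iff]
  tauto

theorem stmt_5_general {V : Type*} [Fintype V] (G : SimpleGraph V) (n k : ℕ)
    (hG : IsNkdGraph G n k 0) (hn : 2 ≤ n) (hk : 1 ≤ k)
    (u v : V) :
    IsNkdGraph (G.deleteEdges {s(u, v)}) n (k - 1) 0 := by
  obtain ⟨hcard, hpar, hG⟩ := hG
  have hext (T : Finset V) (hT : T.card = n) : G.IsExtendableOn (↑T)ᶜ k :=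
    isExtendableOn_iff_forall_isKMatching.2 (hG T hT).2
  refine ⟨by omega, hpar, fun S hS => ?_⟩
  rw [exists_isKMatching_induce_iff (deleteEdges_le _),
    forall_isKMatching_extends_induce_iff (deleteEdges_le _)]
  simp only [Subgraph.spanningCoe_le_deleteEdges_iff]
  obtain ⟨N₀, hN₀, hN₀s, -, hN₀k⟩ := (exists_isKMatching_induce_iff le_rfl).1 (hG S hS).1
  obtain ⟨F₀, -, hF₀, hF₀s⟩ := hext S hS N₀ hN₀ hN₀s hN₀k
  have hsk : 2 * k < ((S : Set V)ᶜ).ncard := by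
    rw [Set.ncard_compl, Set.ncard_coe_finset, hS]
    omega
  have hswap : ∀ a ∉ (S : Set V)ᶜ, ∀ b ∈ (S : Set V)ᶜ,
      G.IsExtendableOn (insert a (S : Set V)ᶜ \ {b}) k := fun a ha b hb =>
    Finset.insert_compl_sdiff_of_forall_card_eq (P := (G.IsExtendableOn · k)) hext hS
      (by simpa using ha) (by simpa using hb)
  obtain ⟨a, ha⟩ : S.Nonempty := Finset.card_pos.1 (by omega)
  constructor
  · obtain ⟨N, hN, hNN₀, hNk, hNuv⟩ :=
      hN₀.exists_ncard_add_two_not_adj (Set.nonempty_of_ncard_ne_zero (by omega)) u v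
    exact ⟨N, hN, hNN₀.trans hN₀s, hNuv, by omega⟩
  · intro N hN hNs hNuv hNk
    exact (hext S hS).exists_extension_not_adj hswap (a := a) (by simpa) hF₀ hF₀s hsk hN hNs
      (by omega) hNuv

theorem stmt_5 {V : Type*} [Fintype V] (G : SimpleGraph V) (n k : ℕ)
    (hG : IsNkdGraph G n k 0) (hn : 2 ≤ n) (hk : 1 ≤ k)
    (u v : V) (huv : G.Adj u v) :
    IsNkdGraph (G.deleteEdges {s(u, v)}) n (k - 1) 0 :=
  stmt_5_general G n k hG hn hk u v
end
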